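/- arXiv:2004.12122 — 3 statements merged into one kernel-verified Lean document; each statement's English description precedes it below -/
import Mathlib

section
/- For all positive integers $s_1, s_2, s_3$ and every positive integer $n$, $\sum_{j=1}^{n} \frac{H_j^{(s_1)} H_j^{(s_3)}}{j^{s_2}} = -H(s_1,s_2,s_3;n) + H(s_3,s_1+s_2;n) + H(s_1+s_2+s_3;n) + H(s_3;n)\,H(s_1,s_2;n)$. -/
/-!
Induction on `n`. Passing from `n` to `n + 1` with `x = 1/(n+1)`, each multiple harmonic sum
gains the term whose last index equals `n + 1`, and the right-hand side grows by
`x^{s₂} (H_n^{(s₁)} + x^{s₁}) (H_n^{(s₃)} + x^{s₃}) = H_{n+1}^{(s₁)} H_{n+1}^{(s₃)} / (n+1)^{s₂}`,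
which is the new term on the left.
-/

open Finset

/-- Auxiliary: multiple harmonic sum with exponent list given in *reverse* order
(head is the last exponent `s_k`), via the standard recurrence. -/
def mhsAux : List ℕ → ℕ → ℚ
  | [], _ => 1
  | s :: rest, n => ∑ m ∈ Finset.Icc 1 n, mhsAux rest (m - 1) / (m : ℚ) ^ s

/-- Multiple harmonic sum `H(s_1,…,s_k; n) = ∑_{1 ≤ j_1 < ⋯ < j_k ≤ n} 1/(j_1^{s_1}⋯j_k^{s_k})`. -/
def mhs (l : List ℕ) (n : ℕ) : ℚ := mhsAux l.reverse n

/-- Generalized harmonic number `H_n^{(s)} = ∑_{m=1}^n 1/m^s`. -/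
def hsum (s n : ℕ) : ℚ := ∑ m ∈ Finset.Icc 1 n, 1 / (m : ℚ) ^ s

lemma hsum_succ (s n : ℕ) : hsum s (n + 1) = hsum s n + 1 / ((n : ℚ) + 1) ^ s := by
  rw [hsum, hsum, sum_Icc_succ_top (by omega)]
  push_cast
  ring

lemma mhs_singleton (s n : ℕ) : mhs [s] n = hsum s n := by
  simp [mhs, mhsAux, hsum]

lemma mhs_append_singleton_succ (l : List ℕ) (s n : ℕ) :
    mhs (l ++ [s]) (n + 1) = mhs (l ++ [s]) n + mhs l n / ((n : ℚ) + 1) ^ s := by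
  simp only [mhs, List.reverse_append, List.reverse_singleton, List.singleton_append, mhsAux]
  rw [sum_Icc_succ_top (by omega), Nat.add_sub_cancel]
  push_cast
  rfl

theorem stmt0_general (s1 s2 s3 n : ℕ) :
    ∑ j ∈ Finset.Icc 1 n, hsum s1 j * hsum s3 j / (j : ℚ) ^ s2 =
      -mhs [s1, s2, s3] n + mhs [s3, s1 + s2] n + mhs [s1 + s2 + s3] n
        + hsum s3 n * mhs [s1, s2] n := by
  induction n with
  | zero => simp [mhs, mhsAux, hsum]
  | succ n ih =>
    have h12 := mhs_append_singleton_succ [s1] s2 n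
    have h123 := mhs_append_singleton_succ [s1, s2] s3 n
    have h3_12 := mhs_append_singleton_succ [s3] (s1 + s2) n
    simp only [List.cons_append, List.nil_append, mhs_singleton] at h12 h123 h3_12
    rw [sum_Icc_succ_top (by omega), ih, h12, h123, h3_12, mhs_singleton, mhs_singleton,
      hsum_succ, hsum_succ, hsum_succ]
    push_cast
    field_simp
    ring

theorem stmt0 (s1 s2 s3 n : ℕ) (hs1 : 0 < s1) (hs2 : 0 < s2) (hs3 : 0 < s3) (hn : 0 < n) :
    ∑ j ∈ Finset.Icc 1 n, hsum s1 j * hsum s3 j / (j : ℚ) ^ s2 =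
      -mhs [s1, s2, s3] n + mhs [s3, s1 + s2] n + mhs [s1 + s2 + s3] n
        + hsum s3 n * mhs [s1, s2] n :=
  stmt0_general s1 s2 s3 n
end

section
/- Let $p$ be a prime with $p \ge 7$. Then $\sum_{j=1}^{p-1} \frac{H_j H_j^{(2)}}{j^{2}} \equiv -\frac{1}{2} B_{p-5} \pmod p$, i.e., the numerator of $\sum_{j=1}^{p-1} \frac{H_j H_j^{(2)}}{j^{2}} + \frac{1}{2}B_{p-5}$ (as a rational number in lowest terms) is divisible by $p$. -/
/-
Modulo `p`, `1 / m ^ s ≡ m ^ (p - 1 - s)`, so `H_j` and `H_j^{(2)}` reduce to the power sums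
`∑_{m ≤ j} m ^ (p - 2)` and `∑_{m ≤ j} m ^ (p - 3)`. The Bernoulli numbers `B_i`, `i ≤ p - 2`, are
`p`-integral, so Faulhaber's formula holds modulo `p` and turns these power sums into polynomials
in `j`. Summing over `1 ≤ j ≤ p - 1` keeps only the monomials whose exponent is a multiple of
`p - 1`; as the odd Bernoulli numbers beyond `B_1` vanish, only the two products `B_1 B_{p-5}`
survive, and `C(p - 1, i) ≡ (-1) ^ i`, `C(p - 2, i) ≡ (-1) ^ i (i + 1)` evaluate them.
-/

open Finset

lemma natCast_ne_zero_of_pos_of_lt {p n : ℕ} (h0 : 0 < n) (hn : n < p) : (n : ZMod p) ≠ 0 := by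
  rw [Ne, ZMod.natCast_eq_zero_iff]
  exact Nat.not_dvd_of_pos_of_lt h0 hn

lemma sum_mul_sum_mul_pow {ι κ μ R : Type*} [CommSemiring R] (s : Finset ι) (t : Finset κ)
    (u : Finset μ) (x : ι → R) (a : κ → R) (b : μ → R) (α : κ → ℕ) (β : μ → ℕ) (γ : ℕ) :
    ∑ j ∈ s, (∑ i ∈ t, a i * x j ^ α i) * (∑ k ∈ u, b k * x j ^ β k) * x j ^ γ =
      ∑ i ∈ t, ∑ k ∈ u, a i * b k * ∑ j ∈ s, x j ^ (α i + β k + γ) := by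
  calc _ = ∑ j ∈ s, ∑ i ∈ t, ∑ k ∈ u, a i * b k * x j ^ (α i + β k + γ) :=
        sum_congr rfl fun j _ => by
          rw [sum_mul_sum, sum_mul]
          exact sum_congr rfl fun i _ => by rw [sum_mul]; exact sum_congr rfl fun k _ => by ring
    _ = _ := by
      simp only [mul_sum]
      rw [sum_comm]
      exact sum_congr rfl fun i _ => sum_comm

lemma odd_index_of_sub_one_dvd {p i k : ℕ} (hp : Odd p) (h7 : 7 ≤ p) (hi : i ≤ p - 2)
    (hk : k ≤ p - 3)
    (hd : p - 1 ∣ (p - 2 + 1 - i) + (p - 3 + 1 - k) + (p - 3))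
    (hne : (i, k) ≠ (1, p - 5)) (hne' : (i, k) ≠ (p - 5, 1)) :
    (Odd i ∧ 1 < i) ∨ (Odd k ∧ 1 < k) := by
  obtain ⟨t, ht⟩ := hd
  have ht3 : t < 3 := by
    by_contra! h
    have := Nat.mul_le_mul_left (p - 1) h
    omega
  simp only [Ne, Prod.mk.injEq, Nat.odd_iff] at hne hne' hp ⊢
  interval_cases t <;> omega

section ModP

variable {p : ℕ} [Fact p.Prime] {q r : ℚ} {x y : ZMod p}

/-- Outside the `p`-integral rationals, `Rat.cast` into `ZMod p` is a junk value (it divides by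
`(q.den : ZMod p) = 0`), so reduction modulo `p` carries the integrality condition. -/
def ReducesTo (p : ℕ) [Fact p.Prime] (q : ℚ) (x : ZMod p) : Prop :=
  (q.den : ZMod p) ≠ 0 ∧ (q : ZMod p) = x

namespace ReducesTo

lemma natCast (n : ℕ) : ReducesTo p n n := by simp [ReducesTo]

lemma one : ReducesTo p 1 1 := by simpa using natCast (p := p) 1

lemma inv_natCast {n : ℕ} (hn : (n : ZMod p) ≠ 0) : ReducesTo p (n : ℚ)⁻¹ (n : ZMod p)⁻¹ := by
  have hpos : 0 < n := Nat.pos_of_ne_zero (by rintro rfl; simp at hn)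
  refine ⟨by rwa [Rat.inv_natCast_den_of_pos hpos], ?_⟩
  rw [Rat.cast_def, Rat.inv_natCast_num_of_pos hpos, Rat.inv_natCast_den_of_pos hpos]
  simp

lemma add (hq : ReducesTo p q x) (hr : ReducesTo p r y) : ReducesTo p (q + r) (x + y) :=
  ⟨ne_zero_of_dvd_ne_zero (by push_cast; exact mul_ne_zero hq.1 hr.1)
    (Nat.cast_dvd_cast (Rat.add_den_dvd q r)),
    by rw [Rat.cast_add_of_ne_zero hq.1 hr.1, hq.2, hr.2]⟩

lemma mul (hq : ReducesTo p q x) (hr : ReducesTo p r y) : ReducesTo p (q * r) (x * y) :=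
  ⟨ne_zero_of_dvd_ne_zero (by push_cast; exact mul_ne_zero hq.1 hr.1)
    (Nat.cast_dvd_cast (Rat.mul_den_dvd q r)),
    by rw [Rat.cast_mul_of_ne_zero hq.1 hr.1, hq.2, hr.2]⟩

lemma neg (hq : ReducesTo p q x) : ReducesTo p (-q) (-x) :=
  ⟨by rw [Rat.den_neg_eq_den]; exact hq.1, by rw [Rat.cast_neg, hq.2]⟩

lemma sub (hq : ReducesTo p q x) (hr : ReducesTo p r y) : ReducesTo p (q - r) (x - y) := by
  simpa only [sub_eq_add_neg] using hq.add hr.neg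

lemma sum {ι : Type*} {s : Finset ι} {f : ι → ℚ} {g : ι → ZMod p}
    (h : ∀ i ∈ s, ReducesTo p (f i) (g i)) : ReducesTo p (∑ i ∈ s, f i) (∑ i ∈ s, g i) := by
  classical
  induction s using Finset.induction_on with
  | empty => simpa using natCast (p := p) 0
  | insert a s ha ih =>
    rw [sum_insert ha, sum_insert ha]
    exact (h a (mem_insert_self a s)).add (ih fun i hi => h i (mem_insert_of_mem hi))

lemma unique (hx : ReducesTo p q x) (hy : ReducesTo p q y) : x = y := hx.2.symm.trans hy.2

lemma dvd_num (h : ReducesTo p q 0) : (p : ℤ) ∣ q.num := by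
  have h0 := h.2
  rw [Rat.cast_def, div_eq_zero_iff, or_iff_left h.1] at h0
  exact (ZMod.intCast_zmod_eq_zero_iff_dvd _ _).mp h0

end ReducesTo

lemma reducesTo_bernoulli' {m : ℕ} (hm : m + 1 < p) :
    ReducesTo p (bernoulli' m) (bernoulli' m : ZMod p) := by
  induction m using Nat.strong_induction_on with
  | _ m ih =>
    -- the recurrence for `bernoulli'` only divides by `m - k + 1 ≤ m + 1 < p`
    have hterm : ∀ k ∈ range m, ReducesTo p (m.choose k / (m - k + 1) * bernoulli' k)
        (m.choose k * ((m - k + 1 : ℕ) : ZMod p)⁻¹ * bernoulli' k) := fun k hk => by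
      have hk : k < m := mem_range.mp hk
      have hden : ((m - k + 1 : ℕ) : ZMod p) ≠ 0 :=
        natCast_ne_zero_of_pos_of_lt (by omega) (by omega)
      have := ((ReducesTo.natCast (m.choose k)).mul (ReducesTo.inv_natCast hden)).mul
        (ih k hk (by omega))
      rwa [Nat.cast_add, Nat.cast_sub hk.le, Nat.cast_one, ← div_eq_mul_inv] at this
    refine ⟨?_, rfl⟩
    rw [bernoulli'_def]
    exact (ReducesTo.one.sub (ReducesTo.sum hterm)).1

lemma natCast_choose_pred {k : ℕ} (hk : k < p) : ((p - 1).choose k : ZMod p) = (-1) ^ k := by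
  have hfac : (k.factorial : ZMod p) ≠ 0 := by
    rw [Ne, ZMod.natCast_eq_zero_iff, Nat.Prime.dvd_factorial Fact.out]
    omega
  have h := ZMod.cast_descFactorial (p := p) hk.le
  rw [Nat.descFactorial_eq_factorial_mul_choose, Nat.cast_mul, mul_comm ((-1 : ZMod p) ^ k)] at h
  exact mul_left_cancel₀ hfac h

lemma natCast_choose_sub_two {k : ℕ} (hk : k + 1 < p) :
    ((p - 2).choose k : ZMod p) = (-1) ^ k * (k + 1) := by
  have h := congrArg (Nat.cast : ℕ → ZMod p) (Nat.add_one_mul_choose_eq (p - 2) k)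
  rw [show p - 2 + 1 = p - 1 by omega] at h
  push_cast [Nat.cast_sub (show 1 ≤ p by omega), natCast_choose_pred hk, ZMod.natCast_self] at h
  linear_combination -h

lemma inv_pow_eq_pow_sub {a : ZMod p} (ha : a ≠ 0) {s : ℕ} (hs : s ≤ p - 1) :
    (a ^ s)⁻¹ = a ^ (p - 1 - s) := by
  refine inv_eq_of_mul_eq_one_right ?_
  rw [← pow_add, Nat.add_sub_cancel' hs, ZMod.pow_card_sub_one_eq_one ha]

lemma reducesTo_one_div_pow {m s : ℕ} (hm : 0 < m) (hmp : m < p) (hs : s ≤ p - 1) :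
    ReducesTo p (1 / (m : ℚ) ^ s) ((m : ZMod p) ^ (p - 1 - s)) := by
  have hm0 := natCast_ne_zero_of_pos_of_lt hm hmp
  have h := ReducesTo.inv_natCast (p := p) (n := m ^ s) (by push_cast; exact pow_ne_zero s hm0)
  push_cast at h
  rwa [one_div, ← inv_pow_eq_pow_sub hm0 hs]

lemma reducesTo_hsum {s j : ℕ} (hs : s ≤ p - 1) (hj : j < p) :
    ReducesTo p (hsum s j) (∑ m ∈ Icc 1 j, (m : ZMod p) ^ (p - 1 - s)) :=
  ReducesTo.sum fun m hm => by
    have hm := mem_Icc.mp hm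
    exact reducesTo_one_div_pow (by omega) (by omega) hs

lemma sum_Icc_pow_eq (e : ℕ) :
    ∑ j ∈ Icc 1 (p - 1), (j : ZMod p) ^ e = if p - 1 ∣ e then -1 else 0 := by
  have hp : p.Prime := Fact.out
  have hlt : ∀ j ∈ Icc 1 (p - 1), j < p := fun j hj => by
    have := (mem_Icc.mp hj).2
    have := hp.two_le
    omega
  have hunits : ∑ j ∈ Icc 1 (p - 1), (j : ZMod p) ^ e = ∑ u : (ZMod p)ˣ, (u : ZMod p) ^ e :=
    sum_bij' (fun j hj => Units.mk0 (j : ZMod p)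
        (natCast_ne_zero_of_pos_of_lt (mem_Icc.mp hj).1 (hlt j hj)))
      (fun u _ => (u : ZMod p).val)
      (fun _ _ => mem_univ _)
      (fun u _ => mem_Icc.mpr ⟨Nat.pos_of_ne_zero ((ZMod.val_ne_zero _).mpr u.ne_zero),
        Nat.le_sub_one_of_lt (ZMod.val_lt _)⟩)
      (fun j hj => by simp [Nat.mod_eq_of_lt (hlt j hj)])
      (fun u _ => Units.ext (ZMod.natCast_zmod_val _))
      (fun _ _ => rfl)
  rw [hunits, FiniteField.sum_pow_units, ZMod.card]

noncomputable def faulhaberCoeff (p : ℕ) [Fact p.Prime] (m i : ℕ) : ZMod p :=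
  (bernoulli' i : ZMod p) * (m + 1).choose i / (m + 1 : ℕ)

lemma sum_Icc_pow_eq_faulhaber {m : ℕ} (hm : m + 1 < p) (n : ℕ) :
    ∑ k ∈ Icc 1 n, (k : ZMod p) ^ m =
      ∑ i ∈ range (m + 1), faulhaberCoeff p m i * (n : ZMod p) ^ (m + 1 - i) := by
  have hm0 : ((m + 1 : ℕ) : ZMod p) ≠ 0 := natCast_ne_zero_of_pos_of_lt (by omega) hm
  have hlhs : ReducesTo p (∑ k ∈ Ico 1 (n + 1), (k : ℚ) ^ m)
      (∑ k ∈ Icc 1 n, (k : ZMod p) ^ m) := by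
    rw [Ico_add_one_right_eq_Icc]
    exact ReducesTo.sum fun k _ => by simpa using ReducesTo.natCast (p := p) (k ^ m)
  have hrhs : ReducesTo p
      (∑ i ∈ range (m + 1), bernoulli' i * (m + 1).choose i * (n : ℚ) ^ (m + 1 - i) / (m + 1))
      (∑ i ∈ range (m + 1), faulhaberCoeff p m i * (n : ZMod p) ^ (m + 1 - i)) :=
    ReducesTo.sum fun i hi => by
      have hi := mem_range.mp hi
      have h := (((reducesTo_bernoulli' (p := p) (m := i) (by omega)).mul
        (ReducesTo.natCast ((m + 1).choose i))).mul
        (ReducesTo.natCast (n ^ (m + 1 - i)))).mul (ReducesTo.inv_natCast hm0)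
      push_cast at h
      convert h using 1
      · ring
      · simp only [faulhaberCoeff]
        push_cast
        ring
  rw [sum_Ico_pow] at hlhs
  exact hlhs.unique hrhs

lemma faulhaberCoeff_of_odd {m i : ℕ} (hi : Odd i) (h1 : 1 < i) : faulhaberCoeff p m i = 0 := by
  simp [faulhaberCoeff, bernoulli'_eq_zero_of_odd hi h1]

lemma cast_bernoulli'_one : (bernoulli' 1 : ZMod p) = 2⁻¹ := by
  rw [bernoulli'_one, Rat.cast_def]
  norm_num

lemma faulhaberCoeff_sub_two {i : ℕ} (hi : i < p) :
    faulhaberCoeff p (p - 2) i = -(-1) ^ i * bernoulli' i := by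
  have hp := (Fact.out : p.Prime).two_le
  rw [faulhaberCoeff, show p - 2 + 1 = p - 1 by omega, natCast_choose_pred hi,
    Nat.cast_sub (by omega), ZMod.natCast_self]
  field_simp
  ring

lemma faulhaberCoeff_sub_three (hp : 3 ≤ p) {i : ℕ} (hi : i + 1 < p) :
    faulhaberCoeff p (p - 3) i = -(-1) ^ i * (i + 1) * bernoulli' i / 2 := by
  rw [faulhaberCoeff, show p - 3 + 1 = p - 2 by omega, natCast_choose_sub_two hi,
    Nat.cast_sub (by omega), ZMod.natCast_self, Nat.cast_ofNat, zero_sub, div_neg]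
  ring

lemma sum_powerSum_mul_powerSum_mul_pow (h7 : 7 ≤ p) :
    ∑ j ∈ Icc 1 (p - 1), (∑ m ∈ Icc 1 j, (m : ZMod p) ^ (p - 2)) *
      (∑ m ∈ Icc 1 j, (m : ZMod p) ^ (p - 3)) * (j : ZMod p) ^ (p - 3) =
      -(bernoulli' (p - 5) : ZMod p) / 2 := by
  have hp : p.Prime := Fact.out
  simp_rw [sum_Icc_pow_eq_faulhaber (p := p) (m := p - 2) (by omega),
    sum_Icc_pow_eq_faulhaber (p := p) (m := p - 3) (by omega)]
  rw [sum_mul_sum_mul_pow, ← sum_product']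
  rw [sum_eq_add (1, p - 5) (p - 5, 1) (by simp only [ne_eq, Prod.mk.injEq]; omega)]
  · simp only [sum_Icc_pow_eq]
    rw [if_pos ⟨2, by omega⟩, if_pos ⟨2, by omega⟩, faulhaberCoeff_sub_two (by omega),
      faulhaberCoeff_sub_two (by omega), faulhaberCoeff_sub_three (by omega) (by omega),
      faulhaberCoeff_sub_three (by omega) (by omega), cast_bernoulli'_one]
    have heven : Even (p - 5) := by
      rcases hp.eq_two_or_odd' with h | h
      · omega
      · exact Nat.Odd.sub_odd h (by decide)
    have h2 : (2 : ZMod p) ≠ 0 := by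
      simpa using natCast_ne_zero_of_pos_of_lt (p := p) (n := 2) (by norm_num) (by omega)
    rw [heven.neg_one_pow, Nat.cast_sub (by omega), ZMod.natCast_self]
    field_simp
    ring
  · rintro ⟨i, k⟩ hik ⟨hne, hne'⟩
    simp only [mem_product, mem_range] at hik
    rw [sum_Icc_pow_eq]
    split_ifs with hd
    · rcases odd_index_of_sub_one_dvd (hp.odd_of_ne_two (by omega)) h7 (by omega) (by omega)
        hd hne hne' with ⟨hodd, h1⟩ | ⟨hodd, h1⟩ <;> simp [faulhaberCoeff_of_odd hodd h1]
    · rw [mul_zero]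
  all_goals exact fun h => (h (by simp only [mem_product, mem_range]; omega)).elim

end ModP

theorem stmt5 (p : ℕ) (hp : p.Prime) (h7 : 7 ≤ p) :
    (p : ℤ) ∣ ((∑ j ∈ Finset.Icc 1 (p - 1), hsum 1 j * hsum 2 j / (j : ℚ) ^ 2)
      - (-(1 / 2) * bernoulli (p - 5))).num := by
  have := Fact.mk hp
  have hsum_reduces : ReducesTo p (∑ j ∈ Icc 1 (p - 1), hsum 1 j * hsum 2 j / (j : ℚ) ^ 2)
      (∑ j ∈ Icc 1 (p - 1), (∑ m ∈ Icc 1 j, (m : ZMod p) ^ (p - 2)) *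
        (∑ m ∈ Icc 1 j, (m : ZMod p) ^ (p - 3)) * (j : ZMod p) ^ (p - 3)) :=
    ReducesTo.sum fun j hj => by
      have hj := mem_Icc.mp hj
      rw [div_eq_mul_one_div]
      exact ((reducesTo_hsum (by omega) (by omega)).mul
        (reducesTo_hsum (by omega) (by omega))).mul
        (reducesTo_one_div_pow (by omega) (by omega) (by omega))
  have hbernoulli_reduces : ReducesTo p (-(1 / 2) * bernoulli (p - 5))
      (-(2 : ZMod p)⁻¹ * bernoulli' (p - 5)) := by
    rw [bernoulli_eq_bernoulli'_of_ne_one (by omega), one_div]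
    simpa using (ReducesTo.inv_natCast (p := p) (n := 2)
      (natCast_ne_zero_of_pos_of_lt (by norm_num) (by omega))).neg.mul
      (reducesTo_bernoulli' (m := p - 5) (by omega))
  refine ReducesTo.dvd_num ?_
  convert hsum_reduces.sub hbernoulli_reduces using 1
  rw [sum_powerSum_mul_powerSum_mul_pow h7]
  ring
end

section
/- Let $s$ be an even positive integer and let $p$ be a prime with $p \ge 3s+3$. Then $\sum_{j=1}^{p-1} \frac{(H_j^{(s)})^2}{j^{s}} \equiv 0 \pmod p$. -/
open Finset

section Helpers

variable {p : ℕ} [hpf : Fact p.Prime]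

private lemma sum_Icc_natCast {M : Type*} [AddCommMonoid M] (g : ZMod p → M) (hg : g 0 = 0) :
    ∑ j ∈ Finset.Icc 1 (p - 1), g ((j : ZMod p)) = ∑ x : ZMod p, g x := by
  have hp : 1 < p := hpf.out.one_lt
  haveI : NeZero p := ⟨hpf.out.pos.ne'⟩
  rw [← Finset.sum_erase_add Finset.univ g (Finset.mem_univ (0 : ZMod p)), hg, add_zero]
  refine Finset.sum_nbij' (fun j => ((j : ZMod p))) (fun x => x.val) ?_ ?_ ?_ ?_ ?_
  · intro j hj
    simp only [Finset.mem_Icc] at hj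
    simp only [Finset.mem_erase, Finset.mem_univ, and_true]
    rw [Ne, ZMod.natCast_eq_zero_iff]
    intro hdvd
    have := Nat.le_of_dvd (by omega) hdvd
    omega
  · intro x hx
    simp only [Finset.mem_erase, Finset.mem_univ, and_true] at hx
    have h1 : x.val < p := ZMod.val_lt x
    have h2 : x.val ≠ 0 := fun h => hx ((ZMod.val_eq_zero x).mp h)
    simp only [Finset.mem_Icc]; omega
  · intro j hj
    simp only [Finset.mem_Icc] at hj
    exact ZMod.val_natCast_of_lt (by omega)
  · intro x _
    exact ZMod.natCast_rightInverse x
  · intro j _; rfl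

/-- power sums of inverses vanish mod p for small exponents -/
private lemma inv_pow_sum_eq_zero {w : ℕ} (hw : 0 < w) (hw2 : w < p - 1) :
    ∑ j ∈ Finset.Icc 1 (p - 1), ((j : ZMod p)⁻¹) ^ w = 0 := by
  rw [sum_Icc_natCast (fun x => (x⁻¹) ^ w) (by simp [zero_pow hw.ne'])]
  have h1 : ∑ x : ZMod p, (x⁻¹) ^ w = ∑ x : ZMod p, x ^ w := by
    exact Fintype.sum_equiv (Equiv.inv (ZMod p)) _ _ (fun x => rfl)
  rw [h1]
  have := FiniteField.sum_pow_lt_card_sub_one (K := ZMod p) w (by rwa [ZMod.card])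
  exact this

end Helpers

theorem stmt15 (s p : ℕ) (hs : 0 < s) (hse : Even s) (hp : p.Prime) (hge : 3 * s + 3 ≤ p) :
    (p : ℤ) ∣ (∑ j ∈ Finset.Icc 1 (p - 1), (hsum s j) ^ 2 / (j : ℚ) ^ s).num := by
  haveI hpf : Fact p.Prime := ⟨hp⟩
  have hp1 : 1 < p := hp.one_lt
  -- the ZMod p picture
  set c : ℕ → (ZMod p) := fun m => ((m : (ZMod p)))⁻¹ with hc
  set F : ℕ → (ZMod p) := fun n => ∑ m ∈ Finset.Icc 1 n, c m ^ s with hF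
  -- power sum facts
  have hAs : F (p - 1) = 0 := inv_pow_sum_eq_zero hs (by omega)
  have hA3s : ∑ j ∈ Finset.Icc 1 (p - 1), c j ^ (3 * s) = 0 :=
    inv_pow_sum_eq_zero (by omega) (by omega)
  -- negation of cast
  have hneg : ∀ m : ℕ, 1 ≤ m → m ≤ p - 1 → c (p - m) = - c m := by
    intro m h1 h2
    have : ((p - m : ℕ) : (ZMod p)) = - (m : (ZMod p)) := by
      have hmp : m ≤ p := by omega
      push_cast [Nat.cast_sub hmp]
      simp [ZMod.natCast_self]
    simp only [hc, this, inv_neg]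
  have hcpow : ∀ m : ℕ, 1 ≤ m → m ≤ p - 1 → c (p - m) ^ s = c m ^ s := by
    intro m h1 h2
    rw [hneg m h1 h2, hse.neg_pow]
  -- recurrence F j = F (j-1) + c j ^ s for j ≥ 1
  have hrec : ∀ j : ℕ, 1 ≤ j → F j = F (j - 1) + c j ^ s := by
    intro j hj
    obtain ⟨k, rfl⟩ : ∃ k, j = k + 1 := ⟨j - 1, by omega⟩
    simp only [hF, Nat.add_sub_cancel]
    exact Finset.sum_Icc_succ_top (by omega) _
  -- reversal of partial sums: F (p - j) = - F (j - 1) for 1 ≤ j ≤ p-1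
  have hFrev : ∀ j : ℕ, 1 ≤ j → j ≤ p - 1 → F (p - j) = - F (j - 1) := by
    intro j h1 h2
    have hsplit : (∑ m ∈ Finset.Icc 1 (p - j), c m ^ s)
        + ∑ m ∈ Finset.Icc (p - j + 1) (p - 1), c m ^ s = F (p - 1) := by
      rw [hF]
      have := Finset.sum_Ioc_consecutive (M := (ZMod p)) (fun m => c m ^ s)
        (show 0 ≤ p - j by omega) (show p - j ≤ p - 1 by omega)
      -- rewrite Icc 1 n as Ioc 0 n
      simp only [← Finset.Icc_add_one_left_eq_Ioc, Nat.succ_eq_add_one, zero_add] at this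
      simpa using this
    have htail : ∑ m ∈ Finset.Icc (p - j + 1) (p - 1), c m ^ s
        = ∑ m ∈ Finset.Icc 1 (j - 1), c m ^ s := by
      refine Finset.sum_nbij' (fun m => p - m) (fun m => p - m) ?_ ?_ ?_ ?_ ?_
      · intro a ha; simp only [Finset.mem_Icc] at ha ⊢; omega
      · intro a ha; simp only [Finset.mem_Icc] at ha ⊢; omega
      · intro a ha; simp only [Finset.mem_Icc] at ha; show p - (p - a) = a; omega
      · intro a ha; simp only [Finset.mem_Icc] at ha; show p - (p - a) = a; omega
      · intro a ha
        simp only [Finset.mem_Icc] at ha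
        show c a ^ s = c (p - a) ^ s
        exact (hcpow a (by omega) (by omega)).symm
    rw [htail, hAs] at hsplit
    have : F (p - j) = (∑ m ∈ Finset.Icc 1 (p - j), c m ^ s) := rfl
    rw [this]
    have : F (j - 1) = (∑ m ∈ Finset.Icc 1 (j - 1), c m ^ s) := rfl
    rw [this]
    linear_combination hsplit
  -- A' = ∑ F j * (c j ^ s)^2 vanishes by reversal
  set A : (ZMod p) := ∑ j ∈ Finset.Icc 1 (p - 1), F j * (c j ^ s) ^ 2 with hA
  have hArev : A = ∑ j ∈ Finset.Icc 1 (p - 1), F (p - j) * (c (p - j) ^ s) ^ 2 := by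
    refine Finset.sum_nbij' (fun j => p - j) (fun j => p - j) ?_ ?_ ?_ ?_ ?_
    · intro a ha; simp only [Finset.mem_Icc] at ha ⊢; omega
    · intro a ha; simp only [Finset.mem_Icc] at ha ⊢; omega
    · intro a ha; simp only [Finset.mem_Icc] at ha; show p - (p - a) = a; omega
    · intro a ha; simp only [Finset.mem_Icc] at ha; show p - (p - a) = a; omega
    · intro a ha
      simp only [Finset.mem_Icc] at ha
      show F a * (c a ^ s) ^ 2 = F (p - (p - a)) * (c (p - (p - a)) ^ s) ^ 2
      have h1 : p - (p - a) = a := by omega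
      rw [h1]
  have hAzero : A = 0 := by
    have h2 : A = ∑ j ∈ Finset.Icc 1 (p - 1), (-(F j - c j ^ s)) * (c j ^ s) ^ 2 := by
      rw [hArev]
      refine Finset.sum_congr rfl ?_
      intro j hj
      simp only [Finset.mem_Icc] at hj
      rw [hFrev j hj.1 hj.2, hcpow j hj.1 hj.2, hrec j hj.1]
      ring_nf
    have h4 : ∑ j ∈ Finset.Icc 1 (p - 1), (-(F j - c j ^ s)) * (c j ^ s) ^ 2
        = -A + ∑ j ∈ Finset.Icc 1 (p - 1), c j ^ (3 * s) := by
      rw [hA, ← Finset.sum_neg_distrib, ← Finset.sum_add_distrib]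
      refine Finset.sum_congr rfl ?_
      intro j _
      have hcc : c j ^ (3 * s) = (c j ^ s) ^ 3 := by rw [← pow_mul, mul_comm]
      rw [hcc]; ring
    have h3 : A = -A + ∑ j ∈ Finset.Icc 1 (p - 1), c j ^ (3 * s) := h2.trans h4
    rw [hA3s, add_zero] at h3
    have h2ne : (2 : (ZMod p)) ≠ 0 := by
      intro h
      have h2' : ((2 : ℕ) : (ZMod p)) = 0 := by push_cast; exact h
      rw [ZMod.natCast_eq_zero_iff] at h2'
      have := Nat.le_of_dvd (by norm_num) h2'
      omega
    have : (2 : (ZMod p)) * A = 0 := by linear_combination h3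
    rcases mul_eq_zero.mp this with h | h
    · exact absurd h h2ne
    · exact h
  -- telescoping identity gives 3 T = 3 A
  set T : (ZMod p) := ∑ j ∈ Finset.Icc 1 (p - 1), F j ^ 2 * c j ^ s with hT
  have htel : ∑ j ∈ Finset.Icc 1 (p - 1), (F j ^ 3 - F (j - 1) ^ 3) = 0 := by
    have h0 : ∀ i, F (1 + i) ^ 3 - F (1 + i - 1) ^ 3
        = F (i + 1) ^ 3 - F i ^ 3 := by
      intro i
      have e2 : 1 + i - 1 = i := by omega
      have e1 : 1 + i = i + 1 := by omega
      rw [e2, e1]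
    have hIcc : Finset.Icc 1 (p - 1) = Finset.Ico 1 p := by
      rw [← Finset.Ico_add_one_right_eq_Icc]
      congr 1
      omega
    have htl : ∑ i ∈ Finset.range (p - 1), (F (i + 1) ^ 3 - F i ^ 3)
        = F (p - 1) ^ 3 - F 0 ^ 3 := Finset.sum_range_sub (fun n => F n ^ 3) (p - 1)
    have hFe : F 0 = 0 := by simp [hF]
    rw [hIcc, Finset.sum_Ico_eq_sum_range]
    simp only [h0]
    rw [htl, hAs, hFe]
    ring
  have hexp : ∀ j : ℕ, 1 ≤ j → F j ^ 3 - F (j - 1) ^ 3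
      = 3 * (F j ^ 2 * c j ^ s) - 3 * (F j * (c j ^ s) ^ 2) + (c j ^ s) ^ 3 := by
    intro j hj
    rw [hrec j hj]
    ring
  have h3T : (3 : (ZMod p)) * T - 3 * A + ∑ j ∈ Finset.Icc 1 (p - 1), c j ^ (3 * s) = 0 := by
    rw [hT, hA, Finset.mul_sum, Finset.mul_sum, ← Finset.sum_sub_distrib,
      ← Finset.sum_add_distrib, ← htel]
    refine Finset.sum_congr rfl ?_
    intro j hj
    simp only [Finset.mem_Icc] at hj
    rw [hexp j hj.1]
    have : c j ^ (3 * s) = (c j ^ s) ^ 3 := by rw [← pow_mul, mul_comm]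
    rw [this]
  rw [hA3s, hAzero, add_zero, mul_zero, sub_zero] at h3T
  have h3ne : (3 : (ZMod p)) ≠ 0 := by
    intro h
    have h3' : ((3 : ℕ) : (ZMod p)) = 0 := by push_cast; exact h
    rw [ZMod.natCast_eq_zero_iff] at h3'
    have := Nat.le_of_dvd (by norm_num) h3'
    omega
  have hTzero : T = 0 := by
    rcases mul_eq_zero.mp h3T with h | h
    · exact absurd h h3ne
    · exact h
  -- transfer to ℚ via a representation predicate
  have hprimeZ : Prime (p : ℤ) := Nat.prime_iff_prime_int.mp hp
  set q : ℚ := ∑ j ∈ Finset.Icc 1 (p - 1), (hsum s j) ^ 2 / (j : ℚ) ^ s with hq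
  set P : ZMod p → ℚ → Prop := fun v x => ∃ a b : ℤ, ¬ ((p : ℤ) ∣ b) ∧
    x * (b : ℚ) = (a : ℚ) ∧ ((a : ZMod p)) = v * ((b : ZMod p)) with hPdef
  have hPadd : ∀ v w x y, P v x → P w y → P (v + w) (x + y) := by
    rintro v w x y ⟨a1, b1, hb1, he1, hv1⟩ ⟨a2, b2, hb2, he2, hv2⟩
    refine ⟨a1 * b2 + a2 * b1, b1 * b2, ?_, ?_, ?_⟩
    · intro h
      rcases hprimeZ.2.2 _ _ h with h' | h'
      · exact hb1 h'
      · exact hb2 h'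
    · push_cast
      linear_combination (b2 : ℚ) * he1 + (b1 : ℚ) * he2
    · push_cast
      linear_combination ((b2 : ℤ) : ZMod p) * hv1 + ((b1 : ℤ) : ZMod p) * hv2
  have hPmul : ∀ v w x y, P v x → P w y → P (v * w) (x * y) := by
    rintro v w x y ⟨a1, b1, hb1, he1, hv1⟩ ⟨a2, b2, hb2, he2, hv2⟩
    refine ⟨a1 * a2, b1 * b2, ?_, ?_, ?_⟩
    · intro h
      rcases hprimeZ.2.2 _ _ h with h' | h'
      · exact hb1 h'
      · exact hb2 h'
    · push_cast
      linear_combination (y * (b2 : ℚ)) * he1 + (a1 : ℚ) * he2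
    · push_cast
      linear_combination ((a2 : ℤ) : ZMod p) * hv1 + (v * ((b1 : ℤ) : ZMod p)) * hv2
  have hPsum : ∀ (t : Finset ℕ) (g : ℕ → ZMod p) (f : ℕ → ℚ),
      (∀ x ∈ t, P (g x) (f x)) → P (∑ x ∈ t, g x) (∑ x ∈ t, f x) := by
    intro t g f
    induction t using Finset.induction_on with
    | empty =>
      intro _
      refine ⟨0, 1, ?_, by simp, by simp⟩
      intro h
      have : (p : ℤ) ≤ 1 := Int.le_of_dvd one_pos h
      omega
    | @insert x t' hx ih =>
      intro hf
      rw [Finset.sum_insert hx, Finset.sum_insert hx]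
      exact hPadd _ _ _ _ (hf x (Finset.mem_insert_self x t'))
        (ih (fun y hy => hf y (Finset.mem_insert_of_mem hy)))
  have hPbase : ∀ m : ℕ, 1 ≤ m → m ≤ p - 1 → P (c m ^ s) (1 / (m : ℚ) ^ s) := by
    intro m h1 h2
    refine ⟨1, (m : ℤ) ^ s, ?_, ?_, ?_⟩
    · intro h
      have h' := hprimeZ.dvd_of_dvd_pow h
      rw [Int.natCast_dvd_natCast] at h'
      have := Nat.le_of_dvd (by omega) h'
      omega
    · have hm0 : ((m : ℚ)) ≠ 0 := by exact_mod_cast (show m ≠ 0 by omega)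
      push_cast
      field_simp
    · have hmK : ((m : ZMod p)) ≠ 0 := by
        rw [Ne, ZMod.natCast_eq_zero_iff]
        intro h; have := Nat.le_of_dvd (by omega) h; omega
      push_cast
      show (1 : ZMod p) = ((m : ZMod p))⁻¹ ^ s * ((m : ZMod p)) ^ s
      rw [← mul_pow, inv_mul_cancel₀ hmK, one_pow]
  have hPhsum : ∀ j : ℕ, j ≤ p - 1 → P (F j) (hsum s j) := by
    intro j hj
    have hFj : F j = ∑ m ∈ Finset.Icc 1 j, c m ^ s := rfl
    rw [hsum, hFj]
    refine hPsum _ _ _ ?_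
    intro m hm
    simp only [Finset.mem_Icc] at hm
    exact hPbase m hm.1 (by omega)
  have hPq : P T q := by
    have hTe : T = ∑ j ∈ Finset.Icc 1 (p - 1), F j ^ 2 * c j ^ s := rfl
    rw [hq, hTe]
    refine hPsum _ _ _ ?_
    intro j hj
    simp only [Finset.mem_Icc] at hj
    have hx : (hsum s j) ^ 2 / (j : ℚ) ^ s
        = (hsum s j * hsum s j) * (1 / (j : ℚ) ^ s) := by ring
    have hv : F j ^ 2 * c j ^ s = (F j * F j) * (c j ^ s) := by ring
    rw [hx, hv]
    exact hPmul _ _ _ _ (hPmul _ _ _ _ (hPhsum j hj.2) (hPhsum j hj.2)) (hPbase j hj.1 hj.2)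
  obtain ⟨a, b, hb, he, hv⟩ := hPq
  rw [hTzero, zero_mul] at hv
  have hpa : (p : ℤ) ∣ a := (ZMod.intCast_zmod_eq_zero_iff_dvd a p).mp hv
  have hd0 : ((q.den : ℚ)) ≠ 0 := by
    exact_mod_cast q.den_ne_zero
  have hqd : ((q.num : ℚ)) = q * ((q.den : ℚ)) :=
    (div_eq_iff hd0).mp (Rat.num_div_den q)
  have hcross : q.num * b = a * (q.den : ℤ) := by
    have h1 : ((q.num : ℚ)) * (b : ℚ) = (a : ℚ) * ((q.den : ℚ)) := by
      linear_combination (b : ℚ) * hqd + ((q.den : ℚ)) * he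
    exact_mod_cast h1
  have hdvd : (p : ℤ) ∣ q.num * b := by
    rw [hcross]
    exact hpa.mul_right _
  rcases hprimeZ.2.2 _ _ hdvd with h | h
  · exact h
  · exact absurd h hb
end
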